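/- arXiv:1812.08831 — 2 statements merged into one kernel-verified Lean document; each statement's English description precedes it below -/
import Mathlib

section
/- Let G be a finite cyclic group, A a finite cyclic group, K ≤ G, and suppose κ, λ : K → A are both injective homomorphisms. Then there exist a homomorphism φ : G → A and an automorphism α of G with α(K) = K such that λ = (φ|_K) · (κ ∘ α|_K). -/
/-!
Both `κ` and `λ` map `K` onto the unique subgroup of `A` of order `|K|`, so `λ = κ ∘ θ` for an
automorphism `θ` of `K`. Automorphisms of the cyclic group `K` are power maps `x ↦ x ^ u` with `u`
a unit mod `|K|`; since units mod `|G|` surject onto units mod `|K|`, some power automorphism of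
`G` restricts to `θ`, and `φ` can be taken trivial.
-/

theorem IsCyclic.coe_subgroup_eq_setOf_pow_card_eq_one {α : Type*} [Group α] [Finite α]
    [IsCyclic α] (H : Subgroup α) : (H : Set α) = {x | x ^ Nat.card H = 1} := by
  classical
  cases nonempty_fintype α
  refine Set.eq_of_subset_of_ncard_le (fun x hx ↦ ?_) ?_
  · exact congrArg Subtype.val (pow_card_eq_one' (x := (⟨x, hx⟩ : H)))
  · rw [Set.ncard_eq_toFinset_card', Set.toFinset_ofPred, ← Nat.card_coe_set_eq]
    exact IsCyclic.card_pow_eq_one_le Nat.card_pos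

theorem IsCyclic.subgroup_eq_of_card_eq {α : Type*} [Group α] [Finite α] [IsCyclic α]
    {H₁ H₂ : Subgroup α} (h : Nat.card H₁ = Nat.card H₂) : H₁ = H₂ :=
  SetLike.coe_injective <| by
    rw [coe_subgroup_eq_setOf_pow_card_eq_one, coe_subgroup_eq_setOf_pow_card_eq_one, h]

noncomputable def powCoprimeMulEquiv {G : Type*} [Group G] [IsMulCommutative G] {n : ℕ}
    (h : (Nat.card G).Coprime n) : G ≃* G :=
  { powCoprime h with
    map_mul' := fun x y ↦ (show Commute x y from Std.Commutative.comm x y).mul_pow n }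

theorem powCoprimeMulEquiv_apply {G : Type*} [Group G] [IsMulCommutative G] {n : ℕ}
    (h : (Nat.card G).Coprime n) (x : G) : powCoprimeMulEquiv h x = x ^ n := rfl

theorem IsCyclic.exists_unit_apply_eq_pow {G : Type*} [Group G] [Finite G] [IsCyclic G]
    (θ : MulAut G) : ∃ u : (ZMod (Nat.card G))ˣ, ∀ g, θ g = g ^ (u : ZMod (Nat.card G)).val := by
  let χ := MulDistribMulAction.toMonoidHomZModOfIsCyclic G (MulAut G) rfl
  refine ⟨((Group.isUnit θ).map χ).unit, fun g ↦ ?_⟩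
  rw [← MulAut.smul_def, ← zpow_natCast]
  refine MulDistribMulAction.toMonoidHomZModOfIsCyclic_apply rfl θ g _ ?_
  rw [IsUnit.unit_spec, Int.cast_natCast, ZMod.natCast_val, ZMod.cast_id', id]

theorem ZMod.exists_coprime_natCast_eq_unit {m n : ℕ} [NeZero n] (hmn : m ∣ n) (u : (ZMod m)ˣ) :
    ∃ v : ℕ, n.Coprime v ∧ (v : ZMod m) = u := by
  obtain ⟨w, rfl⟩ := ZMod.unitsMap_surjective hmn u
  refine ⟨(w : ZMod n).val, (ZMod.val_coe_unit_coprime w).symm, ?_⟩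
  rw [ZMod.unitsMap_def, Units.coe_map, MonoidHom.coe_coe, ZMod.castHom_apply, ZMod.cast_eq_val]

theorem IsCyclic.exists_mulAut_extend {G : Type*} [Group G] [Finite G] [IsCyclic G]
    (K : Subgroup G) (θ : MulAut K) : ∃ α : MulAut G, ∀ k : K, α k = θ k := by
  obtain ⟨u, hu⟩ := exists_unit_apply_eq_pow θ
  obtain ⟨v, hv, hvu⟩ := ZMod.exists_coprime_natCast_eq_unit K.card_subgroup_dvd_card u
  refine ⟨powCoprimeMulEquiv hv, fun k ↦ ?_⟩
  rw [hu, ← hvu, ZMod.val_natCast, pow_mod_natCard, powCoprimeMulEquiv_apply, Subgroup.coe_pow]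

/-- Let `G` and `A` be finite cyclic groups, `K ≤ G`, and suppose
`κ, λ : K → A` are both injective homomorphisms.  Then there exist a
homomorphism `φ : G → A` and an automorphism `α` of `G` with `α(K) = K` such
that `λ = (φ|_K) · (κ ∘ α|_K)`.  (This is the linkage statement: `(G, K, κ)`
and `(G, K, λ)` are linked.) -/
theorem linkage_cyclic (G A : Type*) [Group G] [Finite G] [IsCyclic G]
    [CommGroup A] [Finite A] [IsCyclic A] (K : Subgroup G)
    (κ lam : ↥K →* A) (hκ : Function.Injective κ)
    (hlam : Function.Injective lam) :
    ∃ (φ : G →* A) (α : G ≃* G) (hα : ∀ x ∈ K, α x ∈ K),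
      ∀ k : K, lam k = φ (k : G) * κ ⟨α (k : G), hα (k : G) k.2⟩ := by
  have hrange : lam.range = κ.range := IsCyclic.subgroup_eq_of_card_eq <|
    (Nat.card_congr (MonoidHom.ofInjective hlam).toEquiv).symm.trans
      (Nat.card_congr (MonoidHom.ofInjective hκ).toEquiv)
  let θ : MulAut K := (MonoidHom.ofInjective hlam).trans
    ((MulEquiv.subgroupCongr hrange).trans (MonoidHom.ofInjective hκ).symm)
  have hθ (k : K) : κ (θ k) = lam k := MonoidHom.apply_ofInjective_symm hκ _
  obtain ⟨α, hα⟩ := IsCyclic.exists_mulAut_extend K θ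
  refine ⟨1, α, fun x hx ↦ hα ⟨x, hx⟩ ▸ (θ ⟨x, hx⟩).2, fun k ↦ ?_⟩
  rw [MonoidHom.one_apply, one_mul, ← hθ]
  congr
  exact Subtype.ext (hα k).symm
end

section
/- Let p be a prime and let G and A be finite cyclic p-groups with |A| < |G|. Suppose E = ((G×G)/(Δ_K(G), φ_κ)) is the fibered biset idempotent associated to a pair (K, κ) with κ : K → A faithful. Then E cannot be written as a product X ⊗_{AH} Y where X is an A-fibered (G,H)-biset, Y is an A-fibered (H,G)-biset, and H is a group with |H| < |G|. Concretely: there do not exist a group H with |H| < |G|, pairs (U, φ) ∈ M_{G×H}(A) and (V, ψ) ∈ M_{H×G}(A) with the Mackey product of the corresponding transitive fibered bisets equal to E. -/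
/-!
Let `g` generate `G` and pick `h` with `(g, h) ∈ U`, which exists since `(g, g) ∈ Δ_K(G)`.
For `N = lcm (orderOf h) (exponent A)` the power `(g, h) ^ N = (g ^ N, 1)` lies in `U`, and
composing it with `(1, 1) ∈ V` gives `κ (g ^ N) = φ (g, h) ^ N = 1`; faithfulness of `κ` forces
`g ^ N = 1`. So `|G| = orderOf g` divides `lcm |H| |A|`, which is impossible for a prime power
exceeding both `|H|` and `|A|`.
-/

theorem Nat.Prime.pow_dvd_or_pow_dvd_of_pow_dvd_lcm {p n a b : ℕ} (hp : p.Prime) (ha : a ≠ 0)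
    (hb : b ≠ 0) (h : p ^ n ∣ Nat.lcm a b) : p ^ n ∣ a ∨ p ^ n ∣ b := by
  rw [hp.pow_dvd_iff_le_factorization (Nat.lcm_ne_zero ha hb), Nat.factorization_lcm ha hb,
    Finsupp.sup_apply] at h
  rw [hp.pow_dvd_iff_le_factorization ha, hp.pow_dvd_iff_le_factorization hb]
  exact le_max_iff.mp h

section MackeyProduct

variable {G H A : Type*} [Group G] [Group H] [Monoid A]
  {K : Subgroup G} {κ : K →* A} {U : Subgroup (G × H)} {V : Subgroup (H × G)}
  {φ : U →* A} {ψ : V →* A}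

theorem orderOf_dvd_lcm_exponent_of_mackeyProduct_eq (hκ : Function.Injective κ)
    (hval : ∀ (g g' : G) (h : H) (hu : (g, h) ∈ U) (hv : (h, g') ∈ V),
      ∃ hk : g * g'⁻¹ ∈ K, φ ⟨(g, h), hu⟩ * ψ ⟨(h, g'), hv⟩ = κ ⟨g * g'⁻¹, hk⟩)
    {g : G} {h : H} (hu : (g, h) ∈ U) :
    orderOf g ∣ Nat.lcm (orderOf h) (Monoid.exponent A) := by
  set N := Nat.lcm (orderOf h) (Monoid.exponent A)
  have hhN : h ^ N = 1 := orderOf_dvd_iff_pow_eq_one.mp (Nat.dvd_lcm_left _ _)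
  have hpow : ((g ^ N, 1) : G × H) = (g, h) ^ N := by simp [hhN]
  have huN : ((g ^ N, 1) : G × H) ∈ U := hpow ▸ U.pow_mem hu N
  obtain ⟨hk, hφψ⟩ := hval (g ^ N) 1 1 huN V.one_mem
  have hφ : φ ⟨(g ^ N, 1), huN⟩ = 1 := by
    rw [show (⟨(g ^ N, 1), huN⟩ : U) = ⟨(g, h), hu⟩ ^ N from Subtype.ext hpow, map_pow]
    exact Monoid.exponent_dvd_iff_forall_pow_eq_one.mp (Nat.dvd_lcm_right _ _) _
  have hκN : κ ⟨g ^ N * 1⁻¹, hk⟩ = κ 1 := by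
    rw [← hφψ, hφ, one_mul, map_one]
    exact map_one ψ
  apply orderOf_dvd_of_pow_eq_one
  simpa using congrArg Subtype.val (hκ hκN)

end MackeyProduct

theorem idempotent_reduced_general (p : ℕ) (hp : p.Prime) (G A : Type*) [Group G]
    [Fintype G] [IsCyclic G] [CommGroup A] [Fintype A]
    (hGp : IsPGroup p G)
    (hcard : Fintype.card A < Fintype.card G)
    (K : Subgroup G) (κ : ↥K →* A) (hκ : Function.Injective κ) :
    ¬ ∃ (H : GrpCat), Nat.card H < Nat.card G ∧ Finite H ∧
        ∃ (U : Subgroup (G × H)) (V : Subgroup (H × G))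
          (φ : ↥U →* A) (ψ : ↥V →* A),
          (∀ g g' : G, (∃ h : H, (g, h) ∈ U ∧ (h, g') ∈ V) ↔ g * g'⁻¹ ∈ K) ∧
          ∀ (g g' : G) (h : H) (hu : (g, h) ∈ U) (hv : (h, g') ∈ V),
            ∃ hk : g * g'⁻¹ ∈ K,
              φ ⟨(g, h), hu⟩ * ψ ⟨(h, g'), hv⟩ = κ ⟨g * g'⁻¹, hk⟩ := by
  rintro ⟨H, hHcard, hHfin, U, V, φ, ψ, hmack, hval⟩
  have : Fact p.Prime := ⟨hp⟩
  obtain ⟨n, hn⟩ := IsPGroup.iff_card.mp hGp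
  obtain ⟨g, hg⟩ := IsCyclic.exists_generator (α := G)
  obtain ⟨h, hu, -⟩ := (hmack g g).mpr (by simp [K.one_mem])
  have hdvd : p ^ n ∣ Nat.lcm (Nat.card H) (Nat.card A) := by
    rw [← hn, ← orderOf_eq_card_of_forall_mem_zpowers hg]
    exact (orderOf_dvd_lcm_exponent_of_mackeyProduct_eq hκ hval hu).trans <|
      Nat.lcm_dvd ((orderOf_dvd_natCard h).trans (Nat.dvd_lcm_left _ _))
        (Group.exponent_dvd_nat_card.trans (Nat.dvd_lcm_right _ _))
  simp only [← Nat.card_eq_fintype_card] at hcard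
  rcases hp.pow_dvd_or_pow_dvd_of_pow_dvd_lcm Nat.card_pos.ne' Nat.card_pos.ne' hdvd with hH | hA
  · exact (Nat.le_of_dvd Nat.card_pos hH).not_gt (hn ▸ hHcard)
  · exact (Nat.le_of_dvd Nat.card_pos hA).not_gt (hn ▸ hcard)

/-- Reduction criterion (Theorem 3.2(ii), hard direction): let `p` be a prime and
`G`, `A` finite cyclic `p`-groups with `|A| < |G|`.  If `κ : K → A` is faithful,
then the fibered-biset idempotent `E = ((G×G)/(Δ_K(G), φ_κ))` does not factor
through a group of smaller order: there are no group `H` with `|H| < |G|`, pairs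
`(U, φ) ∈ M_{G×H}(A)` and `(V, ψ) ∈ M_{H×G}(A)` whose Mackey product is `E`,
i.e. with `U ∗ V = Δ_K(G) = {(g,g') : g g'⁻¹ ∈ K}` and `φ ∗ ψ = φ_κ` where
`φ_κ(g, g') = κ(g g'⁻¹)`. -/
theorem idempotent_reduced (p : ℕ) (hp : p.Prime) (G A : Type*) [Group G]
    [Fintype G] [IsCyclic G] [CommGroup A] [Fintype A] [IsCyclic A]
    (hGp : IsPGroup p G) (hAp : IsPGroup p A)
    (hcard : Fintype.card A < Fintype.card G)
    (K : Subgroup G) (κ : ↥K →* A) (hκ : Function.Injective κ) :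
    ¬ ∃ (H : GrpCat), Nat.card H < Nat.card G ∧ Finite H ∧
        ∃ (U : Subgroup (G × H)) (V : Subgroup (H × G))
          (φ : ↥U →* A) (ψ : ↥V →* A),
          (∀ g g' : G, (∃ h : H, (g, h) ∈ U ∧ (h, g') ∈ V) ↔ g * g'⁻¹ ∈ K) ∧
          ∀ (g g' : G) (h : H) (hu : (g, h) ∈ U) (hv : (h, g') ∈ V),
            ∃ hk : g * g'⁻¹ ∈ K,
              φ ⟨(g, h), hu⟩ * ψ ⟨(h, g'), hv⟩ = κ ⟨g * g'⁻¹, hk⟩ :=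
  idempotent_reduced_general p hp G A hGp hcard K κ hκ
end
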